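/- arXiv:1501.06131 — 3 statements merged into one kernel-verified Lean document; each statement's English description precedes it below -/
import Mathlib

section
/- Let q : (0,∞) → (0,∞) be three times continuously differentiable with q'(x) < 0 and q'''(x) < 0 for all x > 0, and suppose q(x) → 0 and q'(x) → 0 as x → ∞. Then for every x > 0, q'(x)² ≤ 2 q''(x) q(x). -/
open Set Filter Topology

/-!
The defect `D = 2 q'' q - q'²` has derivative `2 q''' q + 2 q'' q' - 2 q' q'' = 2 q''' q`, which is
negative because `q > 0`. So `D` is strictly decreasing, and since `q'² → 0` and `q'' q → 0`
(`q''` is positive and decreasing, hence bounded), `D` tends to `0`, so it is positive on `(0, ∞)`.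
Positivity of `q` and `q''` follows in the same way: a strictly decreasing function with limit `0`
is positive, and if `q''(x) ≤ 0` then `q'` would be strictly decreasing beyond `x`, hence positive.
-/

theorem StrictAntiOn.lt_of_tendsto_atTop {α β : Type*} [LinearOrder α] [NoMaxOrder α]
    [LinearOrder β] [TopologicalSpace β] [OrderClosedTopology β] {f : α → β} {a : α} {l : β}
    (hf : StrictAntiOn f (Ioi a)) (hlim : Tendsto f atTop (𝓝 l)) {x : α} (hx : a < x) :
    l < f x := by
  obtain ⟨y, hxy⟩ := exists_gt x
  have : Nonempty α := ⟨x⟩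
  have hy : l ≤ f y := le_of_tendsto hlim <| (eventually_ge_atTop y).mono fun z hz =>
    hf.antitoneOn (hx.trans hxy) (hx.trans (hxy.trans_le hz)) hz
  exact hy.trans_lt (hf hx (hx.trans hxy) hxy)

theorem strictAntiOn_Ioi_of_deriv_neg {f : ℝ → ℝ} {a : ℝ} (hf : ContinuousOn f (Ioi a))
    (hf' : ∀ x > a, deriv f x < 0) : StrictAntiOn f (Ioi a) :=
  strictAntiOn_of_deriv_neg (convex_Ioi a) hf (by simpa using hf')

theorem deriv_pos_of_neg_of_tendsto_zero {g : ℝ → ℝ} {a : ℝ} (hg : ContinuousOn g (Ioi a))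
    (hg' : StrictAntiOn (deriv g) (Ioi a)) (hneg : ∀ x > a, g x < 0)
    (hlim : Tendsto g atTop (𝓝 0)) {x : ℝ} (hx : a < x) : 0 < deriv g x := by
  by_contra! hx'
  have hanti : StrictAntiOn g (Ioi x) :=
    strictAntiOn_Ioi_of_deriv_neg (hg.mono (Ioi_subset_Ioi hx.le)) fun y hy =>
      (hg' hx (hx.trans hy) hy).trans_le hx'
  exact (hneg (x + 1) (by linarith)).not_gt (hanti.lt_of_tendsto_atTop hlim (by linarith))

theorem hasDerivAt_two_mul_deriv_deriv_mul_sub_deriv_sq {q : ℝ → ℝ} {x : ℝ}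
    (h₀ : DifferentiableAt ℝ q x) (h₁ : DifferentiableAt ℝ (deriv q) x)
    (h₂ : DifferentiableAt ℝ (deriv (deriv q)) x) :
    HasDerivAt (fun y => 2 * deriv (deriv q) y * q y - deriv q y ^ 2)
      (2 * deriv (deriv (deriv q)) x * q x) x := by
  refine (((h₂.hasDerivAt.const_mul 2).fun_mul h₀.hasDerivAt).fun_sub
    (h₁.hasDerivAt.fun_pow 2)).congr_deriv ?_
  norm_num
  ring

/-- If `q` is three times continuously differentiable on `(0,∞)` with `q' < 0` and
`q''' < 0` there, and `q(x) → 0`, `q'(x) → 0` as `x → ∞`, then `q'(x)² ≤ 2 q''(x) q(x)`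
for every `x > 0`. -/
theorem deriv_sq_le_two_mul_deriv2_mul_self
    (q : ℝ → ℝ)
    (hq : ContDiffOn ℝ 3 q (Ioi 0))
    (hq' : ∀ x > (0 : ℝ), deriv q x < 0)
    (hq''' : ∀ x > (0 : ℝ), deriv (deriv (deriv q)) x < 0)
    (hlim : Tendsto q atTop (nhds 0))
    (hlim' : Tendsto (deriv q) atTop (nhds 0)) :
    ∀ x > (0 : ℝ), (deriv q x) ^ 2 ≤ 2 * deriv (deriv q) x * q x := by
  have hq₁ : ContDiffOn ℝ 2 (deriv q) (Ioi 0) := hq.deriv_of_isOpen isOpen_Ioi (by norm_num)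
  have hq₂ : ContDiffOn ℝ 1 (deriv (deriv q)) (Ioi 0) :=
    hq₁.deriv_of_isOpen isOpen_Ioi (by norm_num)
  have hdiff {f : ℝ → ℝ} {n : WithTop ℕ∞} (hf : ContDiffOn ℝ n f (Ioi 0)) (hn : n ≠ 0) {y : ℝ}
      (hy : 0 < y) : DifferentiableAt ℝ f y :=
    (hf.differentiableOn hn).differentiableAt (isOpen_Ioi.mem_nhds hy)
  have hq_pos : ∀ y > 0, 0 < q y := fun y hy =>
    (strictAntiOn_Ioi_of_deriv_neg hq.continuousOn hq').lt_of_tendsto_atTop hlim hy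
  have hq₂_anti : StrictAntiOn (deriv (deriv q)) (Ioi 0) :=
    strictAntiOn_Ioi_of_deriv_neg hq₂.continuousOn hq'''
  have hq₂_pos : ∀ y > 0, 0 < deriv (deriv q) y := fun y hy =>
    deriv_pos_of_neg_of_tendsto_zero hq₁.continuousOn hq₂_anti hq' hlim' hy
  set D : ℝ → ℝ := fun y => 2 * deriv (deriv q) y * q y - deriv q y ^ 2
  have hD : ∀ y > 0, HasDerivAt D (2 * deriv (deriv (deriv q)) y * q y) y := fun y hy =>
    hasDerivAt_two_mul_deriv_deriv_mul_sub_deriv_sq (hdiff hq (by norm_num) hy)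
      (hdiff hq₁ (by norm_num) hy) (hdiff hq₂ one_ne_zero hy)
  have hD_anti : StrictAntiOn D (Ioi 0) :=
    strictAntiOn_Ioi_of_deriv_neg (fun y hy => (hD y hy).continuousAt.continuousWithinAt)
      fun y hy => by
        rw [(hD y hy).deriv]
        nlinarith [hq''' y hy, hq_pos y hy]
  have hq₂_bdd : IsBoundedUnder (· ≤ ·) atTop (norm ∘ deriv (deriv q)) :=
    isBoundedUnder_of_eventually_le <| (eventually_gt_atTop 1).mono fun y hy => by
      rw [Function.comp_apply, Real.norm_of_nonneg (hq₂_pos y (by linarith)).le]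
      exact (hq₂_anti (mem_Ioi.2 one_pos) (mem_Ioi.2 (by linarith)) hy).le
  have hD_lim : Tendsto D atTop (𝓝 0) := by
    simpa [D, mul_assoc] using
      ((isBoundedUnder_le_mul_tendsto_zero hq₂_bdd hlim).const_mul 2).sub (hlim'.pow 2)
  intro x hx
  linarith [hD_anti.lt_of_tendsto_atTop hD_lim hx]
end

section
/- Let μ be a probability measure on (0,∞) with ∫_0^∞ s^{-5/2} μ(ds) < ∞, define q(x) = ∫_0^∞ (4πs)^{-1/2} e^{-x/(4s)} μ(ds) and p(x) = q(x²). Then ∫_ℝ p'(x)²/p(x) dx ≤ 8 ∫_0^∞ √x · q''(x) dx. -/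
/-!
Write `q y = ∫ K(s, y) dμ(s)` with `K(s, y) = (4πs)^{-1/2} e^{-y/(4s)}`, so that `p` is the
Gaussian mixture `∫ K(s, x²) dμ(s)`. Since `∂_y K = -(4s)⁻¹ K`, differentiating under the integral
sign (dominated by `1 + s^{-5/2}`) gives `q^{(k)} = ∫ (-(4s)⁻¹)ᵏ K dμ` for `k ≤ 2`, and
Cauchy–Schwarz against the weight `K(·, y) μ` yields `q'² ≤ q q''`. As `p'(x) = 2x q'(x²)`, the
substitution `y = x²` turns `∫ p'²/p` into `4 ∫₀^∞ √y q'²/q ≤ 4 ∫₀^∞ √y q''`. The last integral is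
finite by Tonelli, because `∫₀^∞ √y K(s, y) dy = 2s` (the variance of the Gaussian) and
`s⁻¹ ≤ 1 + s^{-5/2}`.
-/

open Set MeasureTheory Real

theorem rpow_neg_le_one_add_rpow_neg {r t s : ℝ} (hr : 0 ≤ r) (hrt : r ≤ t) (hs : 0 < s) :
    s ^ (-r) ≤ 1 + s ^ (-t) := by
  rcases le_or_gt 1 s with h1 | h1
  · have := rpow_le_one_of_one_le_of_nonpos h1 (neg_nonpos.2 hr)
    linarith [rpow_nonneg hs.le (-t)]
  · linarith [rpow_le_rpow_of_exponent_ge hs h1.le (neg_le_neg hrt)]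

theorem sq_integral_mul_le_integral_mul_integral {α : Type*} [MeasurableSpace α] {ν : Measure α}
    {a w : α → ℝ} (hw : 0 ≤ᵐ[ν] w) (hw_int : Integrable w ν)
    (haw : Integrable (fun x => a x * w x) ν) (ha2w : Integrable (fun x => a x ^ 2 * w x) ν) :
    (∫ x, a x * w x ∂ν) ^ 2 ≤ (∫ x, w x ∂ν) * ∫ x, a x ^ 2 * w x ∂ν := by
  have hquad : ∀ t : ℝ, 0 ≤ (∫ x, w x ∂ν) * (t * t) + (-2 * ∫ x, a x * w x ∂ν) * t
      + ∫ x, a x ^ 2 * w x ∂ν := fun t => by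
    have hexp : ∫ x, (a x - t) ^ 2 * w x ∂ν = (∫ x, w x ∂ν) * (t * t)
        + (-2 * ∫ x, a x * w x ∂ν) * t + ∫ x, a x ^ 2 * w x ∂ν := by
      have hsplit : (fun x => (a x - t) ^ 2 * w x)
          = fun x => a x ^ 2 * w x + (-2 * t) * (a x * w x) + (t * t) * w x := by
        ext x; ring
      rw [hsplit, integral_add _ (hw_int.const_mul _), integral_add ha2w (haw.const_mul _),
        integral_const_mul, integral_const_mul]
      · ring
      · exact ha2w.add (haw.const_mul _)
    rw [← hexp]
    exact integral_nonneg_of_ae (hw.mono fun x hx => mul_nonneg (sq_nonneg _) hx)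
  have := discrim_le_zero hquad
  rw [discrim] at this
  linarith

theorem integral_sq_mul_comp_sq (f : ℝ → ℝ) :
    ∫ x, x ^ 2 * f (x ^ 2) = ∫ y in Ioi 0, √y * f y := by
  rw [← integral_comp_rpow_Ioi (fun y => √y * f y) two_ne_zero]
  have := integral_comp_abs (f := fun x => x ^ 2 * f (x ^ 2))
  simp only [sq_abs] at this
  rw [this, ← integral_const_mul]
  refine setIntegral_congr_fun measurableSet_Ioi fun x (hx : 0 < x) => ?_
  rw [smul_eq_mul, rpow_two, abs_two, sqrt_sq hx.le, show (2 : ℝ) - 1 = 1 by norm_num, rpow_one]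
  ring

theorem integral_deriv_sq_div_comp_sq {q : ℝ → ℝ} (hq : ∀ y > 0, DifferentiableAt ℝ q y) :
    ∫ x, deriv (fun x => q (x ^ 2)) x ^ 2 / q (x ^ 2)
      = 4 * ∫ y in Ioi 0, √y * (deriv q y ^ 2 / q y) := by
  have hderiv : ∀ x ≠ 0, deriv (fun x => q (x ^ 2)) x = deriv q (x ^ 2) * (2 * x) := by
    intro x hx
    have := ((hq _ (by positivity)).hasDerivAt.comp x (hasDerivAt_pow 2 x)).deriv
    simpa [Function.comp_def] using this
  rw [← integral_sq_mul_comp_sq, ← integral_const_mul]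
  refine integral_congr_ae ((Measure.ae_ne volume 0).mono fun x hx => ?_)
  simp only [hderiv x hx]
  ring

theorem integral_deriv_sq_div_comp_sq_le {q : ℝ → ℝ} (hq : ∀ y > 0, DifferentiableAt ℝ q y)
    (hq_nonneg : ∀ y > 0, 0 ≤ q y) (hq_deriv : ∀ y > 0, deriv q y ^ 2 / q y ≤ deriv (deriv q) y)
    (hint : IntegrableOn (fun y => √y * deriv (deriv q) y) (Ioi 0)) :
    ∫ x, deriv (fun x => q (x ^ 2)) x ^ 2 / q (x ^ 2)
      ≤ 4 * ∫ y in Ioi 0, √y * deriv (deriv q) y := by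
  rw [integral_deriv_sq_div_comp_sq hq]
  gcongr 4 * ?_
  refine integral_mono_of_nonneg ?_ hint ?_ <;>
    refine (ae_restrict_iff' measurableSet_Ioi).2 (.of_forall fun y (hy : 0 < y) => ?_)
  · exact mul_nonneg (sqrt_nonneg y) (div_nonneg (sq_nonneg _) (hq_nonneg y hy))
  · exact mul_le_mul_of_nonneg_left (hq_deriv y hy) (sqrt_nonneg y)

namespace HeatMixture

/-- The heat kernel `(4πs)^{-1/2} e^{-x²/(4s)}` written as a function of `y = x²`. -/
noncomputable def heatKernelSq (s y : ℝ) : ℝ := (4 * π * s) ^ (-(1 : ℝ) / 2) * exp (-y / (4 * s))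

noncomputable def mixtureDeriv (μ : Measure ℝ) (k : ℕ) (y : ℝ) : ℝ :=
  ∫ s, (-(4 * s)⁻¹) ^ k * heatKernelSq s y ∂μ

theorem heatKernelSq_pos {s : ℝ} (hs : 0 < s) (y : ℝ) : 0 < heatKernelSq s y :=
  mul_pos (rpow_pos_of_pos (by positivity) _) (exp_pos _)

theorem heatKernelSq_le {s y : ℝ} (hs : 0 < s) (hy : 0 ≤ y) :
    heatKernelSq s y ≤ s ^ (-(1 : ℝ) / 2) := by
  have hexp : exp (-y / (4 * s)) ≤ 1 :=
    exp_le_one_iff.2 (by rw [neg_div]; exact neg_nonpos.2 (by positivity))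
  have hconst : (4 * π * s) ^ (-(1 : ℝ) / 2) ≤ s ^ (-(1 : ℝ) / 2) :=
    rpow_le_rpow_of_nonpos hs (by nlinarith [pi_gt_three]) (by norm_num)
  calc heatKernelSq s y ≤ (4 * π * s) ^ (-(1 : ℝ) / 2) * 1 :=
        mul_le_mul_of_nonneg_left hexp (rpow_nonneg (by positivity) _)
    _ ≤ s ^ (-(1 : ℝ) / 2) := by rw [mul_one]; exact hconst

theorem hasDerivAt_pow_mul_heatKernelSq (k : ℕ) (s y : ℝ) :
    HasDerivAt (fun y => (-(4 * s)⁻¹) ^ k * heatKernelSq s y)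
      ((-(4 * s)⁻¹) ^ (k + 1) * heatKernelSq s y) y := by
  have hlin : HasDerivAt (fun y : ℝ => -y / (4 * s)) (-(4 * s)⁻¹) y := by
    simpa [div_eq_mul_inv] using (hasDerivAt_id y).neg.div_const (4 * s)
  refine ((hlin.exp.const_mul ((4 * π * s) ^ (-(1 : ℝ) / 2))).const_mul
    ((-(4 * s)⁻¹) ^ k)).congr_deriv ?_
  rw [heatKernelSq, pow_succ]; ring

theorem abs_pow_mul_heatKernelSq_le {k : ℕ} (hk : k ≤ 2) {s y : ℝ} (hs : 0 < s) (hy : 0 ≤ y) :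
    |(-(4 * s)⁻¹) ^ k * heatKernelSq s y| ≤ 1 + s ^ (-(5 : ℝ) / 2) := by
  have hpow : |(-(4 * s)⁻¹) ^ k| ≤ s⁻¹ ^ k := by
    rw [abs_pow, abs_neg, abs_inv, abs_of_pos (by positivity)]
    exact pow_le_pow_left₀ (by positivity) (inv_anti₀ hs (by linarith)) k
  have hrpow : s⁻¹ ^ k * s ^ (-(1 : ℝ) / 2) = s ^ (-((k : ℝ) + 1 / 2)) := by
    rw [neg_add, rpow_add hs, rpow_neg hs.le, rpow_natCast, inv_pow]; norm_num
  calc |(-(4 * s)⁻¹) ^ k * heatKernelSq s y|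
      ≤ s⁻¹ ^ k * s ^ (-(1 : ℝ) / 2) := by
        rw [abs_mul, abs_of_pos (heatKernelSq_pos hs y)]
        exact mul_le_mul hpow (heatKernelSq_le hs hy) (heatKernelSq_pos hs y).le (by positivity)
    _ ≤ 1 + s ^ (-(5 : ℝ) / 2) := by
        rw [hrpow, neg_div]
        exact rpow_neg_le_one_add_rpow_neg (by positivity)
          (by have : (k : ℝ) ≤ 2 := by exact_mod_cast hk
              linarith) hs

theorem integral_sqrt_mul_heatKernelSq {s : ℝ} (hs : 0 < s) :
    ∫ y in Ioi 0, √y * heatKernelSq s y = 2 * s := by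
  have hform : ∀ y, √y * heatKernelSq s y
      = (4 * π * s) ^ (-(1 : ℝ) / 2) * (y ^ ((3 / 2 : ℝ) - 1) * exp (-((4 * s)⁻¹ * y))) := by
    intro y
    rw [heatKernelSq, sqrt_eq_rpow, show (3 / 2 : ℝ) - 1 = 1 / 2 by norm_num, neg_div (4 * s) y,
      div_eq_inv_mul y (4 * s)]
    ring
  have hGamma : Gamma (3 / 2) = √π / 2 := by
    rw [show (3 / 2 : ℝ) = 1 / 2 + 1 by norm_num, Gamma_add_one (by norm_num), Gamma_one_half_eq]
    ring
  simp_rw [hform]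
  rw [integral_const_mul, integral_rpow_mul_exp_neg_mul_Ioi (by norm_num) (by positivity), hGamma,
    one_div, inv_inv]
  have h4s : 0 < 4 * s := by positivity
  rw [show (3 / 2 : ℝ) = 1 + 1 / 2 by norm_num, rpow_add h4s, rpow_one, ← sqrt_eq_rpow,
    show (-(1 : ℝ) / 2) = -(1 / 2) by norm_num, rpow_neg (by positivity), ← sqrt_eq_rpow,
    mul_comm 4 π, mul_assoc, sqrt_mul pi_pos.le]
  field_simp
  ring

section Mixture

theorem ae_pos_of_measure_Iic_eq_zero {μ : Measure ℝ} (hsupp : μ (Iic 0) = 0) :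
    ∀ᵐ s ∂μ, 0 < s :=
  (measure_eq_zero_iff_ae_notMem.1 hsupp).mono fun _ hs => not_le.1 hs

theorem mixtureDeriv_nonneg {μ : Measure ℝ} (hsupp : μ (Iic 0) = 0) {k : ℕ} (hk : Even k) (y : ℝ) :
    0 ≤ mixtureDeriv μ k y :=
  integral_nonneg_of_ae <| (ae_pos_of_measure_Iic_eq_zero hsupp).mono fun _ hs =>
    mul_nonneg (hk.pow_nonneg _) (heatKernelSq_pos hs y).le

variable {μ : Measure ℝ} [IsFiniteMeasure μ]

theorem integrable_of_abs_le_one_add_rpow (hsupp : μ (Iic 0) = 0)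
    (hint : Integrable (fun s : ℝ => s ^ (-(5 : ℝ) / 2)) μ) {f : ℝ → ℝ}
    (hf : AEStronglyMeasurable f μ) (hbound : ∀ s > 0, |f s| ≤ 1 + s ^ (-(5 : ℝ) / 2)) :
    Integrable f μ :=
  ((integrable_const 1).add hint).mono' hf <|
    (ae_pos_of_measure_Iic_eq_zero hsupp).mono fun s hs => hbound s hs

theorem integrable_pow_mul_heatKernelSq (hsupp : μ (Iic 0) = 0)
    (hint : Integrable (fun s : ℝ => s ^ (-(5 : ℝ) / 2)) μ) {k : ℕ} (hk : k ≤ 2) {y : ℝ}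
    (hy : 0 ≤ y) : Integrable (fun s => (-(4 * s)⁻¹) ^ k * heatKernelSq s y) μ :=
  integrable_of_abs_le_one_add_rpow hsupp hint
    (by unfold heatKernelSq; fun_prop) fun _ hs => abs_pow_mul_heatKernelSq_le hk hs hy

theorem hasDerivAt_mixtureDeriv (hsupp : μ (Iic 0) = 0)
    (hint : Integrable (fun s : ℝ => s ^ (-(5 : ℝ) / 2)) μ) {k : ℕ} (hk : k ≤ 1) {y : ℝ}
    (hy : 0 < y) : HasDerivAt (mixtureDeriv μ k) (mixtureDeriv μ (k + 1) y) y :=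
  (hasDerivAt_integral_of_dominated_loc_of_deriv_le (Ioi_mem_nhds hy)
    (.of_forall fun z => by unfold heatKernelSq; fun_prop)
    (integrable_pow_mul_heatKernelSq hsupp hint (by omega) hy.le)
    (by unfold heatKernelSq; fun_prop)
    ((ae_pos_of_measure_Iic_eq_zero hsupp).mono fun _ hs _ (hz : 0 < _) =>
      abs_pow_mul_heatKernelSq_le (by omega) hs hz.le)
    ((integrable_const 1).add hint)
    (.of_forall fun s z _ => hasDerivAt_pow_mul_heatKernelSq k s z)).2

theorem sq_mixtureDeriv_one_le (hsupp : μ (Iic 0) = 0)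
    (hint : Integrable (fun s : ℝ => s ^ (-(5 : ℝ) / 2)) μ) {y : ℝ} (hy : 0 ≤ y) :
    mixtureDeriv μ 1 y ^ 2 ≤ mixtureDeriv μ 0 y * mixtureDeriv μ 2 y := by
  have h := sq_integral_mul_le_integral_mul_integral (a := fun s => -(4 * s)⁻¹)
    (w := fun s => heatKernelSq s y)
    ((ae_pos_of_measure_Iic_eq_zero hsupp).mono fun s hs => (heatKernelSq_pos hs y).le)
    (by simpa using integrable_pow_mul_heatKernelSq hsupp hint (k := 0) (by norm_num) hy)
    (by simpa using integrable_pow_mul_heatKernelSq hsupp hint (k := 1) (by norm_num) hy)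
    (integrable_pow_mul_heatKernelSq hsupp hint le_rfl hy)
  simpa [mixtureDeriv] using h

theorem integrableOn_sqrt_mul_mixtureDeriv_two (hsupp : μ (Iic 0) = 0)
    (hint : Integrable (fun s : ℝ => s ^ (-(5 : ℝ) / 2)) μ) :
    IntegrableOn (fun y => √y * mixtureDeriv μ 2 y) (Ioi 0) := by
  set G : ℝ → ℝ → ℝ := fun y s => (-(4 * s)⁻¹) ^ 2 * (√y * heatKernelSq s y)
  have hG : AEStronglyMeasurable (Function.uncurry G) ((volume.restrict (Ioi 0)).prod μ) := by
    unfold G heatKernelSq Function.uncurry; fun_prop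
  have hG_int : ∀ {s}, 0 < s → IntegrableOn (G · s) (Ioi 0) := fun hs =>
    -- a nonzero Bochner integral forces integrability
    (Integrable.of_integral_ne_zero (by
      rw [integral_sqrt_mul_heatKernelSq hs]; positivity)).const_mul _
  have hG_norm : ∀ {s}, 0 < s → ∫ y in Ioi 0, ‖G y s‖ = (8 * s)⁻¹ := fun {s} hs => by
    have hG_nonneg : ∀ y, 0 ≤ G y s := fun y =>
      mul_nonneg (sq_nonneg _) (mul_nonneg (sqrt_nonneg y) (heatKernelSq_pos hs y).le)
    simp_rw [norm_of_nonneg (hG_nonneg _), G]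
    rw [integral_const_mul, integral_sqrt_mul_heatKernelSq hs]
    field_simp
    ring
  have hprod := (integrable_prod_iff' hG).2 ⟨(ae_pos_of_measure_Iic_eq_zero hsupp).mono
    fun s hs => hG_int hs, integrable_of_abs_le_one_add_rpow hsupp hint
    hG.prod_swap.norm.integral_prod_right' fun s hs => ?_⟩
  · refine hprod.integral_prod_left.congr (.of_forall fun y => ?_)
    simp only [G, mixtureDeriv, Function.uncurry_apply_pair, ← integral_const_mul]
    congr 1; ext s; ring
  · change |∫ y in Ioi 0, ‖G y s‖| ≤ _
    rw [hG_norm hs, abs_of_pos (by positivity)]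
    calc (8 * s)⁻¹ ≤ s⁻¹ := inv_anti₀ hs (by linarith)
      _ = s ^ (-1 : ℝ) := (rpow_neg_one s).symm
      _ ≤ 1 + s ^ (-(5 : ℝ) / 2) := by
        rw [neg_div]; exact rpow_neg_le_one_add_rpow_neg zero_le_one (by norm_num) hs

end Mixture

end HeatMixture

open HeatMixture

/-- Let `μ` be a probability measure on `(0,∞)` with `∫ s^{-5/2} μ(ds) < ∞`, let
`q(x) = ∫₀^∞ (4πs)^{-1/2} e^{-x/(4s)} μ(ds)` and `p(x) = q(x²)`. Then
`∫_ℝ p'(x)²/p(x) dx ≤ 8 ∫₀^∞ √x · q''(x) dx`. -/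
theorem fisher_integral_le_eight_int_sqrt_q''
    (μ : Measure ℝ) [IsProbabilityMeasure μ]
    (hsupp : μ (Iic 0) = 0)
    (hint : Integrable (fun s : ℝ => s ^ (-(5 : ℝ)/2)) μ)
    (q p : ℝ → ℝ)
    (hq : ∀ x : ℝ, q x = ∫ s, (4 * π * s) ^ (-(1 : ℝ)/2) * exp (-x / (4 * s)) ∂μ)
    (hp : ∀ x : ℝ, p x = q (x ^ 2)) :
    ∫ x : ℝ, (deriv p x) ^ 2 / p x
      ≤ 8 * ∫ x in Ioi (0 : ℝ), Real.sqrt x * deriv (deriv q) x := by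
  obtain rfl : q = mixtureDeriv μ 0 := funext fun y => by simp [hq, mixtureDeriv, heatKernelSq]
  obtain rfl : p = fun x => mixtureDeriv μ 0 (x ^ 2) := funext hp
  have hderiv : ∀ k ≤ 1, ∀ y > 0, HasDerivAt (mixtureDeriv μ k) (mixtureDeriv μ (k + 1) y) y :=
    fun k hk y hy => hasDerivAt_mixtureDeriv hsupp hint hk hy
  have hq' : ∀ y > 0, deriv (mixtureDeriv μ 0) y = mixtureDeriv μ 1 y :=
    fun y hy => (hderiv 0 zero_le_one y hy).deriv
  have hq'' : ∀ y > 0, deriv (deriv (mixtureDeriv μ 0)) y = mixtureDeriv μ 2 y := fun y hy => by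
    rw [(Filter.eventuallyEq_of_mem (Ioi_mem_nhds hy) hq').deriv_eq]
    exact (hderiv 1 le_rfl y hy).deriv
  have hI : 0 ≤ ∫ y in Ioi 0, √y * deriv (deriv (mixtureDeriv μ 0)) y :=
    setIntegral_nonneg measurableSet_Ioi fun y hy => by
      rw [hq'' y hy]; exact mul_nonneg (sqrt_nonneg y) (mixtureDeriv_nonneg hsupp even_two y)
  calc _ ≤ 4 * ∫ y in Ioi 0, √y * deriv (deriv (mixtureDeriv μ 0)) y :=
        integral_deriv_sq_div_comp_sq_le (fun y hy => (hderiv 0 zero_le_one y hy).differentiableAt)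
          (fun y _ => mixtureDeriv_nonneg hsupp Even.zero y)
          (fun y hy => by
            rw [hq' y hy, hq'' y hy]
            exact div_le_of_le_mul₀ (mixtureDeriv_nonneg hsupp Even.zero y)
              (mixtureDeriv_nonneg hsupp even_two y)
              ((sq_mixtureDeriv_one_le hsupp hint hy.le).trans_eq (mul_comm _ _)))
          ((integrableOn_sqrt_mul_mixtureDeriv_two hsupp hint).congr_fun
            (fun y hy => by rw [hq'' y hy]) measurableSet_Ioi)
    _ ≤ 8 * _ := by linarith
end

section
/- Let μ be a probability measure on (0,∞) with Laplace transform ∫_0^∞ e^{-rs} μ(ds) = e^{-F(r)}, and suppose ∫_0^∞ s^{-5/2} μ(ds) < ∞. Define p(x) = ∫_0^∞ (4πs)^{-1/2} exp(-x²/(4s)) μ(ds). Then ∫_ℝ p'(x)²/p(x) dx ≤ 2 ∫_0^∞ e^{-F(r)} dr. -/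
/-!
Write `p = ∫ g_s μ(ds)` with `g_s` the heat kernel at time `s`, i.e. the centred Gaussian density
of variance `2s`. Since `∂ₓ g_s = -(x / 2s) g_s`, the Cauchy–Schwarz inequality for the measure
`g_s(x) μ(ds)` gives `p'(x)² ≤ p(x) ∫ (x / 2s)² g_s(x) μ(ds)`. Integrating in `x` and using
`∫ x² g_s(x) dx = 2s` yields `∫ p'² / p ≤ ½ ∫ s⁻¹ μ(ds)`, and by Fubini
`∫ s⁻¹ μ(ds) = ∫₀^∞ ∫ e^{-rs} μ(ds) dr = ∫₀^∞ e^{-F(r)} dr`.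
-/

open Set MeasureTheory Real ProbabilityTheory

theorem integrable_rpow_of_le {μ : Measure ℝ} [IsFiniteMeasure μ] (hμ : ∀ᵐ s ∂μ, 0 < s)
    {a b : ℝ} (hab : a ≤ b) (hb : b ≤ 0) (ha : Integrable (fun s => s ^ a) μ) :
    Integrable (fun s => s ^ b) μ := by
  refine (ha.add (integrable_const 1)).mono' (by fun_prop) ?_
  filter_upwards [hμ] with s hs
  rw [norm_of_nonneg (rpow_nonneg hs.le _), Pi.add_apply]
  rcases le_total s 1 with h | h
  · linarith [rpow_le_rpow_of_exponent_ge hs h hab]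
  · linarith [rpow_le_one_of_one_le_of_nonpos h hb, rpow_nonneg hs.le a]

theorem sq_integral_mul_le_integral_sq_mul_mul_integral {α : Type*} [MeasurableSpace α]
    {μ : Measure α} {f w : α → ℝ} (hw : 0 ≤ᵐ[μ] w) (hwi : Integrable w μ)
    (hf : AEStronglyMeasurable f μ) (hfw : Integrable (fun a => f a ^ 2 * w a) μ) :
    (∫ a, f a * w a ∂μ) ^ 2 ≤ (∫ a, f a ^ 2 * w a ∂μ) * ∫ a, w a ∂μ := by
  have hfwi : Integrable (fun a => f a * w a) μ := by
    refine (hfw.add hwi).mono' (hf.mul hwi.1) ?_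
    filter_upwards [hw] with a ha
    rw [norm_mul, norm_of_nonneg ha, Real.norm_eq_abs, Pi.add_apply]
    have habs : |f a| ≤ f a ^ 2 + 1 := by nlinarith [sq_abs (f a), sq_nonneg (|f a| - 1)]
    nlinarith [mul_le_mul_of_nonneg_right habs ha]
  -- `t ↦ ∫ (f - t)² w` is a nonnegative quadratic polynomial, so its discriminant is `≤ 0`.
  have hquad : ∀ t : ℝ,
      0 ≤ (∫ a, w a ∂μ) * (t * t) + (-2 * ∫ a, f a * w a ∂μ) * t + ∫ a, f a ^ 2 * w a ∂μ := by
    intro t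
    have hexpand : ∫ a, (f a - t) ^ 2 * w a ∂μ
        = ∫ a, f a ^ 2 * w a + (-2 * t) * (f a * w a) + (t * t) * w a ∂μ :=
      integral_congr_ae (ae_of_all _ fun a => by ring)
    rw [integral_add ?_ (hwi.const_mul _), integral_add hfw (hfwi.const_mul _),
      integral_const_mul, integral_const_mul] at hexpand
    · have hnonneg : 0 ≤ ∫ a, (f a - t) ^ 2 * w a ∂μ :=
        integral_nonneg_of_ae (hw.mono fun a ha => mul_nonneg (sq_nonneg _) ha)
      linarith
    · exact hfw.add (hfwi.const_mul _)
  have := discrim_le_zero hquad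
  rw [discrim] at this
  linarith

noncomputable def heatKernel (s x : ℝ) : ℝ :=
  (4 * π * s) ^ (-(1 : ℝ) / 2) * exp (-(x ^ 2) / (4 * s))

@[fun_prop]
theorem measurable_heatKernel : Measurable fun p : ℝ × ℝ => heatKernel p.1 p.2 := by
  unfold heatKernel; fun_prop

theorem heatKernel_pos {s : ℝ} (hs : 0 < s) (x : ℝ) : 0 < heatKernel s x := by
  unfold heatKernel; positivity

theorem heatKernel_le {s : ℝ} (hs : 0 < s) (x : ℝ) :
    heatKernel s x ≤ (4 * π) ^ (-(1 : ℝ) / 2) * s ^ (-(1 : ℝ) / 2) := by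
  rw [← mul_rpow (by positivity) hs.le]
  refine mul_le_of_le_one_right (by positivity) (exp_le_one_iff.mpr ?_)
  rw [neg_div]; exact neg_nonpos.mpr (by positivity)

theorem hasDerivAt_heatKernel {s : ℝ} (hs : 0 < s) (x : ℝ) :
    HasDerivAt (heatKernel s) (-(x / (2 * s)) * heatKernel s x) x := by
  have hexp : HasDerivAt (fun y : ℝ => -(y ^ 2) / (4 * s)) (-(x / (2 * s))) x := by
    refine ((hasDerivAt_pow 2 x).fun_neg.div_const (4 * s)).congr_deriv ?_
    field_simp; ring
  exact (hexp.exp.const_mul _).congr_deriv (by unfold heatKernel; ring)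

theorem heatKernel_eq_gaussianPDFReal {s : ℝ} (hs : 0 < s) (x : ℝ) :
    heatKernel s x = gaussianPDFReal 0 (2 * s).toNNReal x := by
  simp only [heatKernel, gaussianPDFReal_def, sub_zero]
  rw [Real.coe_toNNReal _ (by positivity), sqrt_eq_rpow, ← rpow_neg (by positivity)]
  congr 2 <;> ring

theorem integral_sq_mul_heatKernel {s : ℝ} (hs : 0 < s) :
    ∫ x, x ^ 2 * heatKernel s x = 2 * s := by
  have hv : (2 * s).toNNReal ≠ 0 := (Real.toNNReal_pos.mpr (by positivity)).ne'
  have := variance_fun_id_gaussianReal (μ := 0) (v := (2 * s).toNNReal)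
  rw [variance_eq_integral measurable_id'.aemeasurable, integral_id_gaussianReal,
    integral_gaussianReal_eq_integral_smul hv, Real.coe_toNNReal _ (by positivity)] at this
  simpa [heatKernel_eq_gaussianPDFReal hs, mul_comm] using this

theorem abs_div_mul_heatKernel_le {s : ℝ} (hs : 0 < s) (x : ℝ) :
    |x / (2 * s)| * heatKernel s x ≤ |x| / 2 * (4 * π) ^ (-(1 : ℝ) / 2) * s ^ (-(3 : ℝ) / 2) := by
  have hexp : s ^ (-(3 : ℝ) / 2) = s ^ (-(1 : ℝ) / 2) / s := by
    rw [← rpow_sub_one hs.ne']; norm_num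
  rw [hexp, abs_div, abs_of_pos (by positivity : 0 < 2 * s)]
  calc |x| / (2 * s) * heatKernel s x
      ≤ |x| / (2 * s) * ((4 * π) ^ (-(1 : ℝ) / 2) * s ^ (-(1 : ℝ) / 2)) := by
        gcongr; exact heatKernel_le hs x
    _ = _ := by field_simp

theorem integral_sq_div_mul_heatKernel {s : ℝ} (hs : 0 < s) :
    ∫ x, (x / (2 * s)) ^ 2 * heatKernel s x = (2 * s)⁻¹ := by
  simp_rw [div_pow, div_mul_eq_mul_div, integral_div, integral_sq_mul_heatKernel hs]
  field_simp

theorem integral_exp_neg_mul_Ioi_zero {s : ℝ} (hs : 0 < s) :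
    ∫ r in Ioi 0, exp (-(r * s)) = s⁻¹ := by
  simp_rw [← mul_neg, mul_comm _ (-s)]
  rw [integral_exp_mul_Ioi (neg_lt_zero.mpr hs)]
  simp

section GaussianMixture

variable {μ : Measure ℝ} (hμ : ∀ᵐ s ∂μ, 0 < s)
include hμ

theorem integrable_heatKernel (h : Integrable (fun s => s ^ (-(1 : ℝ) / 2)) μ) (x : ℝ) :
    Integrable (fun s => heatKernel s x) μ := by
  refine (h.const_mul ((4 * π) ^ (-(1 : ℝ) / 2))).mono' (by fun_prop) ?_
  filter_upwards [hμ] with s hs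
  rw [norm_of_nonneg (heatKernel_pos hs x).le]
  exact heatKernel_le hs x

theorem integral_heatKernel_pos [NeZero μ] (h : Integrable (fun s => s ^ (-(1 : ℝ) / 2)) μ)
    (x : ℝ) : 0 < ∫ s, heatKernel s x ∂μ := by
  have hnonneg : ∀ᵐ s ∂μ, 0 ≤ heatKernel s x := hμ.mono fun s hs => (heatKernel_pos hs x).le
  refine (integral_nonneg_of_ae hnonneg).lt_of_ne' fun hzero => ?_
  obtain ⟨s, hs, hs_zero⟩ :=
    (hμ.and ((integral_eq_zero_iff_of_nonneg_ae hnonneg (integrable_heatKernel hμ h x)).mp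
      hzero)).exists
  exact (heatKernel_pos hs x).ne' hs_zero

theorem hasDerivAt_integral_heatKernel (h12 : Integrable (fun s => s ^ (-(1 : ℝ) / 2)) μ)
    (h32 : Integrable (fun s => s ^ (-(3 : ℝ) / 2)) μ) (x₀ : ℝ) :
    HasDerivAt (fun x => ∫ s, heatKernel s x ∂μ)
      (∫ s, -(x₀ / (2 * s)) * heatKernel s x₀ ∂μ) x₀ := by
  have hbound : ∀ᵐ s ∂μ, ∀ x ∈ Metric.ball x₀ 1, ‖-(x / (2 * s)) * heatKernel s x‖
      ≤ (|x₀| + 1) / 2 * (4 * π) ^ (-(1 : ℝ) / 2) * s ^ (-(3 : ℝ) / 2) := by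
    filter_upwards [hμ] with s hs x hx
    have hx' : |x| ≤ |x₀| + 1 := by
      have := abs_sub_abs_le_abs_sub x x₀
      rw [Metric.mem_ball, dist_eq_norm, Real.norm_eq_abs] at hx
      linarith
    rw [norm_mul, norm_neg, Real.norm_eq_abs, norm_of_nonneg (heatKernel_pos hs x).le]
    refine (abs_div_mul_heatKernel_le hs x).trans ?_
    gcongr
  exact (hasDerivAt_integral_of_dominated_loc_of_deriv_le (Metric.ball_mem_nhds x₀ one_pos)
    (.of_forall fun x => (by fun_prop : Measurable fun s => heatKernel s x).aestronglyMeasurable)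
    (integrable_heatKernel hμ h12 x₀) (by fun_prop) hbound (h32.const_mul _)
    (hμ.mono fun s hs x _ => hasDerivAt_heatKernel hs x)).2

theorem integrable_prod_sq_div_mul_heatKernel [SFinite μ]
    (hinv : Integrable (fun s => s⁻¹) μ) :
    Integrable (Function.uncurry fun x s => (x / (2 * s)) ^ 2 * heatKernel s x)
      (volume.prod μ) := by
  rw [integrable_prod_iff' (by unfold Function.uncurry; fun_prop)]
  simp only [Function.uncurry_apply_pair]
  refine ⟨hμ.mono fun s hs => .of_integral_ne_zero ?_, (hinv.const_mul 2⁻¹).congr ?_⟩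
  · rw [integral_sq_div_mul_heatKernel hs]; positivity
  · filter_upwards [hμ] with s hs
    simp_rw [norm_of_nonneg (mul_nonneg (sq_nonneg _) (heatKernel_pos hs _).le)]
    rw [integral_sq_div_mul_heatKernel hs, mul_inv]

theorem integral_integral_sq_div_mul_heatKernel [SFinite μ]
    (hinv : Integrable (fun s => s⁻¹) μ) :
    ∫ x, ∫ s, (x / (2 * s)) ^ 2 * heatKernel s x ∂μ = 2⁻¹ * ∫ s, s⁻¹ ∂μ := by
  rw [integral_integral_swap (integrable_prod_sq_div_mul_heatKernel hμ hinv),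
    ← integral_const_mul]
  refine integral_congr_ae ?_
  filter_upwards [hμ] with s hs
  rw [integral_sq_div_mul_heatKernel hs, mul_inv]

theorem integral_sq_deriv_div_le [SFinite μ] [NeZero μ]
    (h12 : Integrable (fun s => s ^ (-(1 : ℝ) / 2)) μ)
    (h32 : Integrable (fun s => s ^ (-(3 : ℝ) / 2)) μ) (hinv : Integrable (fun s => s⁻¹) μ) :
    ∫ x, deriv (fun y => ∫ s, heatKernel s y ∂μ) x ^ 2 / ∫ s, heatKernel s x ∂μ
      ≤ 2⁻¹ * ∫ s, s⁻¹ ∂μ := by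
  have hprod := integrable_prod_sq_div_mul_heatKernel hμ hinv
  have hpointwise : ∀ᵐ x, deriv (fun y => ∫ s, heatKernel s y ∂μ) x ^ 2 / ∫ s, heatKernel s x ∂μ
      ≤ ∫ s, (x / (2 * s)) ^ 2 * heatKernel s x ∂μ := by
    filter_upwards [hprod.prod_right_ae] with x hx
    rw [(hasDerivAt_integral_heatKernel hμ h12 h32 x).deriv,
      div_le_iff₀ (integral_heatKernel_pos hμ h12 x)]
    simpa only [neg_sq] using sq_integral_mul_le_integral_sq_mul_mul_integral
      (f := fun s => -(x / (2 * s))) (hμ.mono fun s hs => (heatKernel_pos hs x).le)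
      (integrable_heatKernel hμ h12 x)
      (by fun_prop : Measurable fun s => -(x / (2 * s))).aestronglyMeasurable
      (by simpa only [neg_sq, Function.uncurry_apply_pair] using hx)
  have hnonneg : ∀ x,
      0 ≤ deriv (fun y => ∫ s, heatKernel s y ∂μ) x ^ 2 / ∫ s, heatKernel s x ∂μ :=
    fun x => div_nonneg (sq_nonneg _) (integral_heatKernel_pos hμ h12 x).le
  calc _ ≤ ∫ x, ∫ s, (x / (2 * s)) ^ 2 * heatKernel s x ∂μ :=
        integral_mono_of_nonneg (.of_forall hnonneg) hprod.integral_prod_left hpointwise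
    _ = 2⁻¹ * ∫ s, s⁻¹ ∂μ := integral_integral_sq_div_mul_heatKernel hμ hinv

theorem setIntegral_Ioi_integral_exp_neg_mul [SFinite μ] (hinv : Integrable (fun s => s⁻¹) μ) :
    ∫ r in Ioi 0, ∫ s, exp (-(r * s)) ∂μ = ∫ s, s⁻¹ ∂μ := by
  have hprod : Integrable (Function.uncurry fun r s => exp (-(r * s)))
      ((volume.restrict (Ioi 0)).prod μ) := by
    rw [integrable_prod_iff' (by unfold Function.uncurry; fun_prop)]
    simp only [Function.uncurry_apply_pair]
    refine ⟨hμ.mono fun s hs => ?_, hinv.congr ?_⟩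
    · have := integrableOn_exp_mul_Ioi (neg_lt_zero.mpr hs) 0
      simp only [neg_mul, mul_comm s] at this
      exact this
    · filter_upwards [hμ] with s hs
      simp_rw [norm_of_nonneg (exp_pos _).le]
      rw [integral_exp_neg_mul_Ioi_zero hs]
  rw [integral_integral_swap hprod]
  refine integral_congr_ae ?_
  filter_upwards [hμ] with s hs
  exact integral_exp_neg_mul_Ioi_zero hs

end GaussianMixture

/-- Let `μ` be a probability measure on `(0,∞)` with Laplace transform
`∫₀^∞ e^{-rs} μ(ds) = e^{-F(r)}` and `∫ s^{-5/2} μ(ds) < ∞`. Define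
`p(x) = ∫₀^∞ (4πs)^{-1/2} exp(-x²/(4s)) μ(ds)`. Then
`∫_ℝ p'(x)²/p(x) dx ≤ 2 ∫₀^∞ e^{-F(r)} dr`. -/
theorem fisher_integral_le_two_int_exp_neg_F
    (μ : Measure ℝ) [IsProbabilityMeasure μ]
    (hsupp : μ (Iic 0) = 0)
    (hint : Integrable (fun s : ℝ => s ^ (-(5 : ℝ)/2)) μ)
    (F : ℝ → ℝ)
    (hF : ∀ r > (0 : ℝ), ∫ s, exp (-(r * s)) ∂μ = exp (-F r))
    (p : ℝ → ℝ)
    (hp : ∀ x : ℝ, p x = ∫ s, (4 * π * s) ^ (-(1 : ℝ)/2) * exp (-(x ^ 2) / (4 * s)) ∂μ) :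
    ∫ x : ℝ, (deriv p x) ^ 2 / p x ≤ 2 * ∫ r in Ioi (0 : ℝ), exp (-F r) := by
  have hμ : ∀ᵐ s ∂μ, 0 < s := measure_mono_null (fun s (hs : ¬0 < s) => not_lt.mp hs) hsupp
  have h32 :=
    integrable_rpow_of_le hμ (by norm_num : -(5 : ℝ) / 2 ≤ -(3 : ℝ) / 2) (by norm_num) hint
  have h12 :=
    integrable_rpow_of_le hμ (by norm_num : -(3 : ℝ) / 2 ≤ -(1 : ℝ) / 2) (by norm_num) h32
  have hinv : Integrable (fun s => s⁻¹) μ := by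
    simpa only [rpow_neg_one] using
      integrable_rpow_of_le hμ (by norm_num : -(3 : ℝ) / 2 ≤ -1) (by norm_num) h32
  have hlaplace : ∫ r in Ioi 0, exp (-F r) = ∫ s, s⁻¹ ∂μ := by
    rw [← setIntegral_Ioi_integral_exp_neg_mul hμ hinv]
    exact setIntegral_congr_fun measurableSet_Ioi fun r hr => (hF r hr).symm
  have hinv_nonneg : 0 ≤ ∫ s, s⁻¹ ∂μ :=
    integral_nonneg_of_ae (hμ.mono fun s hs => (inv_pos.mpr hs).le)
  rw [show p = fun x => ∫ s, heatKernel s x ∂μ from funext hp, hlaplace]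
  linarith [integral_sq_deriv_div_le hμ h12 h32 hinv]
end
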